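/- arXiv:0903.5512 — 3 statements merged into one kernel-verified Lean document; each statement's English description precedes it below -/
import Mathlib

section
/- Let a ≤ b ≤ c be positive integers such that c = k·a + l·b for some nonnegative integers k, l. Then the map F : C^3 → C^3 defined as the composition (x, y, z + x^k y^l) ∘ (x + z^a, y + z^b, z), i.e. F(x,y,z) = (x + z^a, y + z^b, z + (x+z^a)^k (y+z^b)^l), is a polynomial automorphism of C^3 whose coordinates have total degrees a, b, c respectively. -/
open MvPolynomial Finset

/-- A polynomial map `ℂ^n → ℂ^n`, given by its coordinate polynomials. -/
abbrev PolyMap (n : ℕ) := Fin n → MvPolynomial (Fin n) ℂ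

/-- Composition of polynomial maps: `(compPM F G) = F ∘ G`. -/
noncomputable def compPM {n : ℕ} (F G : PolyMap n) : PolyMap n :=
  fun i => aeval G (F i)

/-- The identity polynomial map. -/
noncomputable def idPM (n : ℕ) : PolyMap n := fun i => X i

/-- `F` is a polynomial automorphism: it has a polynomial inverse. -/
def IsPolyAut {n : ℕ} (F : PolyMap n) : Prop :=
  ∃ G : PolyMap n, compPM F G = idPM n ∧ compPM G F = idPM n

/-- `F` is elementary: it changes one coordinate `j` by adding a polynomial
not involving the variable `j`. -/
def IsElementaryPM {n : ℕ} (F : PolyMap n) : Prop :=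
  ∃ (j : Fin n) (g : MvPolynomial (Fin n) ℂ),
    degreeOf j g = 0 ∧ F j = X j + g ∧ ∀ i, i ≠ j → F i = X i

/-- `F` is a linear (degree ≤ 1) automorphism. -/
def IsLinearPM {n : ℕ} (F : PolyMap n) : Prop :=
  IsPolyAut F ∧ ∀ i, (F i).totalDegree ≤ 1

/-- `F` is tame: a composition of linear and elementary automorphisms. -/
inductive IsTamePM : {n : ℕ} → PolyMap n → Prop
  | lin {n} (F : PolyMap n) : IsLinearPM F → IsTamePM F
  | elem {n} (F : PolyMap n) : IsElementaryPM F → IsTamePM F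
  | comp {n} (F G : PolyMap n) : IsTamePM F → IsTamePM G → IsTamePM (compPM F G)

/-- The multidegree of a polynomial map of `ℂ^3`. -/
noncomputable def mdeg3 (F : PolyMap 3) : ℕ × ℕ × ℕ :=
  ((F 0).totalDegree, (F 1).totalDegree, (F 2).totalDegree)

/-! `F` is the composite of the triangular automorphisms `(x, y, z + x^k y^l)` and
`(x + z^a, y + z^b, z)`, each inverted by subtracting the added term. The total degrees are
bounded above by subadditivity, and from below by restricting to the `z`-axis, where `F` becomes
`(t^a, t^b, t + t^c)` because `c = k a + l b`. -/

namespace MvPolynomial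

theorem natDegree_aeval_le_totalDegree {σ R : Type*} [CommSemiring R] (p : MvPolynomial σ R)
    {f : σ → Polynomial R} (hf : ∀ i, (f i).natDegree ≤ 1) :
    (aeval f p).natDegree ≤ p.totalDegree := by
  simpa using aeval_natDegree_le p le_rfl f hf

theorem natDegree_single_X_le_one {σ R : Type*} [CommSemiring R] [DecidableEq σ] (j i : σ) :
    ((Pi.single j Polynomial.X : σ → Polynomial R) i).natDegree ≤ 1 := by
  rcases eq_or_ne i j with rfl | h
  · simpa using Polynomial.natDegree_X_le
  · simp [h]

theorem totalDegree_X_add_X_pow {σ R : Type*} [CommSemiring R] [Nontrivial R] [DecidableEq σ]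
    {i j : σ} (hij : i ≠ j) {n : ℕ} (hn : 0 < n) :
    (X i + X j ^ n : MvPolynomial σ R).totalDegree = n := by
  refine le_antisymm ((totalDegree_add _ _).trans (max_le ?_ ?_)) ?_
  · rw [totalDegree_X]; exact hn
  · simp
  · calc n = (aeval (Pi.single j Polynomial.X) (X i + X j ^ n : MvPolynomial σ R)).natDegree := by
          simp [hij]
      _ ≤ _ := natDegree_aeval_le_totalDegree _ (natDegree_single_X_le_one j)

end MvPolynomial

theorem compPM_assoc {n : ℕ} (F G H : PolyMap n) :
    compPM (compPM F G) H = compPM F (compPM G H) := by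
  funext i
  simp only [compPM, aeval_eq_bind₁, bind₁_bind₁]
  rfl

theorem compPM_idPM {n : ℕ} (F : PolyMap n) : compPM F (idPM n) = F := by
  funext i
  exact aeval_X_left_apply (F i)

theorem idPM_compPM {n : ℕ} (F : PolyMap n) : compPM (idPM n) F = F := by
  funext i
  exact aeval_X F i

theorem IsPolyAut.comp {n : ℕ} {F G : PolyMap n} (hF : IsPolyAut F) (hG : IsPolyAut G) :
    IsPolyAut (compPM F G) := by
  obtain ⟨F', hFF', hF'F⟩ := hF
  obtain ⟨G', hGG', hG'G⟩ := hG
  refine ⟨compPM G' F', ?_, ?_⟩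
  · rw [compPM_assoc, ← compPM_assoc G, hGG', idPM_compPM, hFF']
  · rw [compPM_assoc, ← compPM_assoc F', hF'F, idPM_compPM, hG'G]

theorem isPolyAut_shear_z (g : MvPolynomial (Fin 2) ℂ) :
    IsPolyAut ![X 0, X 1, X 2 + rename Fin.castSucc g] := by
  have hg (h : MvPolynomial (Fin 3) ℂ) :
      bind₁ ![X 0, X 1, h] (rename Fin.castSucc g) = rename Fin.castSucc g := by
    have h_castSucc : ![X 0, X 1, h] ∘ Fin.castSucc = (X ∘ Fin.castSucc : Fin 2 → _) := by
      funext i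
      fin_cases i <;> rfl
    rw [← aeval_eq_bind₁, aeval_rename, h_castSucc, rename_eq_aeval]
  refine ⟨![X 0, X 1, X 2 - rename Fin.castSucc g], ?_, ?_⟩ <;>
  · funext i
    fin_cases i <;> simp [compPM, idPM, hg]

theorem isPolyAut_shear_xy (u v : Polynomial ℂ) :
    IsPolyAut ![X 0 + Polynomial.aeval (X 2) u, X 1 + Polynomial.aeval (X 2) v, X 2] := by
  refine ⟨![X 0 - Polynomial.aeval (X 2) u, X 1 - Polynomial.aeval (X 2) v, X 2], ?_, ?_⟩ <;>
  · funext i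
    fin_cases i <;> simp [compPM, idPM, ← Polynomial.aeval_algHom_apply]

theorem totalDegree_X_add_pow_mul_pow {a b c k l : ℕ} (ha : 0 < a) (hb : 0 < b) (hc₀ : 0 < c)
    (hc : c = k * a + l * b) :
    (X 2 + (X 0 + X 2 ^ a) ^ k * (X 1 + X 2 ^ b) ^ l : MvPolynomial (Fin 3) ℂ).totalDegree
      = c := by
  refine le_antisymm ((totalDegree_add _ _).trans (max_le ?_ ?_)) ?_
  · rw [totalDegree_X]; exact hc₀
  · refine (totalDegree_mul _ _).trans ?_
    rw [hc]
    gcongr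
    · exact (totalDegree_pow _ _).trans (by rw [totalDegree_X_add_X_pow (by decide) ha])
    · exact (totalDegree_pow _ _).trans (by rw [totalDegree_X_add_X_pow (by decide) hb])
  · have h_restrict : aeval (Pi.single 2 Polynomial.X : Fin 3 → Polynomial ℂ)
        (X 2 + (X 0 + X 2 ^ a) ^ k * (X 1 + X 2 ^ b) ^ l : MvPolynomial (Fin 3) ℂ)
          = (Polynomial.X + Polynomial.X ^ c : Polynomial ℂ) := by
      simp [hc, pow_add, pow_mul, mul_comm]
    -- for `c = 1` this coefficient is `2`
    have h_coeff : (Polynomial.X + Polynomial.X ^ c : Polynomial ℂ).coeff c ≠ 0 := by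
      rw [Polynomial.coeff_add, Polynomial.coeff_X, Polynomial.coeff_X_pow, if_pos rfl]
      split_ifs <;> norm_num
    calc c ≤ (Polynomial.X + Polynomial.X ^ c : Polynomial ℂ).natDegree :=
          Polynomial.le_natDegree_of_ne_zero h_coeff
      _ ≤ _ := h_restrict ▸ natDegree_aeval_le_totalDegree _ (natDegree_single_X_le_one 2)

theorem stmt1 (a b c k l : ℕ) (ha : 0 < a) (hab : a ≤ b) (hbc : b ≤ c)
    (hc : c = k * a + l * b) :
    ∀ F : PolyMap 3,
      F = compPM ![X 0, X 1, X 2 + X 0 ^ k * X 1 ^ l]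
                 ![X 0 + X 2 ^ a, X 1 + X 2 ^ b, X 2] →
      IsPolyAut F ∧
      F = ![X 0 + X 2 ^ a, X 1 + X 2 ^ b,
            X 2 + (X 0 + X 2 ^ a) ^ k * (X 1 + X 2 ^ b) ^ l] ∧
      mdeg3 F = (a, b, c) := by
  intro F hF
  have hF_formula : F = ![X 0 + X 2 ^ a, X 1 + X 2 ^ b,
      X 2 + (X 0 + X 2 ^ a) ^ k * (X 1 + X 2 ^ b) ^ l] := by
    subst hF
    funext i
    fin_cases i <;> simp [compPM]
  refine ⟨?_, hF_formula, ?_⟩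
  · rw [hF]
    refine IsPolyAut.comp ?_ ?_
    · have h := isPolyAut_shear_z (X 0 ^ k * X 1 ^ l)
      simp only [map_mul, map_pow, rename_X] at h
      exact h
    · have h := isPolyAut_shear_xy (Polynomial.X ^ a) (Polynomial.X ^ b)
      simp only [map_pow, Polynomial.aeval_X] at h
      exact h
  · have hb : 0 < b := ha.trans_le hab
    simp only [hF_formula, mdeg3, Matrix.cons_val_zero, Matrix.cons_val_one, Matrix.cons_val_two,
      Matrix.head_cons, Matrix.tail_cons]
    rw [totalDegree_X_add_X_pow (by decide) ha, totalDegree_X_add_X_pow (by decide) hb,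
      totalDegree_X_add_pow_mul_pow ha hb (hb.trans_le hbc) hc]
end

section
/- Let a, b be positive integers with b > a > 2, e = lcm(a,b), and 0 < m < a. In the polynomial v(x,y,z) = Σ_{i=1}^{e/a} C(e/a, i)(x + z^m)^i z^{e−ia} − Σ_{j=1}^{e/b} C(e/b, j) y^j z^{e−jb} over C[x,y,z], the total degree of v equals e − a + m, with highest-degree monomial (e/a)·z^m·z^{e−a} (after the degree-e terms z^e cancel). -/
open MvPolynomial Finset

/-! Modulo `x`, `(x + z^m)^i z^(e - i a)` is the pure power `z^(e - i (a - m))`, so the monomial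
`z^(e - a + m)` occurs in `v` only through the term `i = 1`, with coefficient `C(e/a, 1) = e/a`.
Every term of the first sum has total degree at most `e - i (a - m)` and every term of the second
at most `e - j (b - 1)`; since `m > 0` and `b > a`, both are at most `e - a + m`. -/

namespace Nat

theorem mul_add_sub_mul_le {m a l e : ℕ} (hma : m ≤ a) (hl : 1 ≤ l) (hle : l * a ≤ e) :
    m * l + (e - l * a) ≤ e - a + m := by
  obtain ⟨l, rfl⟩ := Nat.exists_eq_add_of_le' hl
  have : m * l ≤ l * a := by rw [Nat.mul_comm]; exact Nat.mul_le_mul_left l hma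
  ring_nf at *
  omega

theorem mul_add_sub_mul_eq_iff {m a l e : ℕ} (hma : m < a) (hl : 1 ≤ l) (hle : l * a ≤ e) :
    m * l + (e - l * a) = e - a + m ↔ l = 1 := by
  obtain ⟨l, rfl⟩ := Nat.exists_eq_add_of_le' hl
  rcases Nat.eq_zero_or_pos l with rfl | hl0
  · simp [Nat.add_comm]
  · have : m * l < l * a := by rw [Nat.mul_comm]; exact Nat.mul_lt_mul_of_pos_left hma hl0
    ring_nf at *
    omega

end Nat

namespace MvPolynomial

variable {R σ : Type*}

theorem totalDegree_eq_of_coeff_single_ne_zero [CommSemiring R] {p : MvPolynomial σ R} {k : σ}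
    {d : ℕ} (hp : p.totalDegree ≤ d) (hd : p.coeff (Finsupp.single k d) ≠ 0) :
    p.totalDegree = d :=
  le_antisymm hp <| by simpa using le_totalDegree (mem_support_iff.mpr hd)

theorem coeff_single_X_mul_of_ne [CommSemiring R] {i k : σ} (hik : i ≠ k) (N : ℕ)
    (p : MvPolynomial σ R) : coeff (Finsupp.single k N) (X i * p) = 0 := by
  classical
  rw [coeff_X_mul', if_neg]
  simp [hik.symm]

theorem X_dvd_X_add_X_pow_pow_sub [CommRing R] (i k : σ) (m n : ℕ) :
    (X i : MvPolynomial σ R) ∣ (X i + X k ^ m) ^ n - X k ^ (m * n) := by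
  rw [pow_mul]
  have h := sub_dvd_pow_sub_pow (X i + X k ^ m : MvPolynomial σ R) (X k ^ m) n
  rwa [add_sub_cancel_right] at h

theorem coeff_single_X_add_X_pow_pow_mul [CommRing R] {i k : σ} (hik : i ≠ k) (m n t N : ℕ) :
    coeff (Finsupp.single k N) ((X i + X k ^ m) ^ n * X k ^ t : MvPolynomial σ R) =
      if m * n + t = N then 1 else 0 := by
  classical
  obtain ⟨q, hq⟩ := X_dvd_X_add_X_pow_pow_sub (R := R) i k m n
  rw [sub_eq_iff_eq_add'.mp hq, add_mul, coeff_add, mul_assoc, coeff_single_X_mul_of_ne hik,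
    add_zero, ← pow_add, coeff_X_pow]
  exact if_congr (Finsupp.single_injective k).eq_iff rfl rfl

theorem coeff_single_C_mul_X_pow_mul_X_pow_of_ne [CommSemiring R] {j k : σ} (hjk : j ≠ k)
    (c : R) {n : ℕ} (hn : 0 < n) (t N : ℕ) :
    coeff (Finsupp.single k N) (C c * X j ^ n * X k ^ t) = 0 := by
  obtain ⟨n, rfl⟩ := Nat.exists_eq_add_of_lt hn
  rw [pow_succ', mul_left_comm, mul_assoc, coeff_single_X_mul_of_ne hjk]

theorem totalDegree_C_mul_X_add_X_pow_pow_mul_le [CommSemiring R] [Nontrivial R] (i k : σ)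
    (c : R) {m : ℕ} (hm : 1 ≤ m) (n t : ℕ) :
    (C c * (X i + X k ^ m) ^ n * X k ^ t).totalDegree ≤ m * n + t := by
  have hbase : (X i + X k ^ m : MvPolynomial σ R).totalDegree ≤ m :=
    (totalDegree_add _ _).trans (by rw [totalDegree_X, totalDegree_X_pow]; omega)
  calc (C c * (X i + X k ^ m) ^ n * X k ^ t).totalDegree
      ≤ (C c).totalDegree + n * (X i + X k ^ m).totalDegree + (X k ^ t).totalDegree :=
        (totalDegree_mul _ _).trans <| add_le_add_left
          ((totalDegree_mul _ _).trans (add_le_add_right (totalDegree_pow _ _) _)) _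
    _ ≤ m * n + t := by
        rw [totalDegree_C, totalDegree_X_pow, zero_add, Nat.mul_comm m]
        gcongr

theorem totalDegree_C_mul_X_pow_mul_X_pow_le [CommSemiring R] [Nontrivial R] (j k : σ) (c : R)
    (n t : ℕ) : (C c * X j ^ n * X k ^ t).totalDegree ≤ n + t :=
  (totalDegree_mul _ _).trans <| add_le_add ((totalDegree_mul _ _).trans
    (by rw [totalDegree_C, totalDegree_X_pow, zero_add])) (totalDegree_X_pow _ _).le

section Sums

variable {i j k : σ} {a b m n e : ℕ}

theorem coeff_sum_C_mul_X_add_X_pow_pow_mul [CommRing R] (hik : i ≠ k) (c : ℕ → R)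
    (hma : m < a) (hn : 1 ≤ n) (hne : n * a ≤ e) :
    coeff (Finsupp.single k (e - a + m))
      (∑ l ∈ Icc 1 n, C (c l) * (X i + X k ^ m) ^ l * X k ^ (e - l * a)) = c 1 := by
  rw [coeff_sum, Finset.sum_eq_single_of_mem 1 (mem_Icc.mpr ⟨le_rfl, hn⟩)]
  · rw [mul_assoc, coeff_C_mul, coeff_single_X_add_X_pow_pow_mul hik, if_pos (by omega), mul_one]
  · intro l hl hl_ne
    obtain ⟨hl1, hln⟩ := mem_Icc.mp hl
    have hle := (Nat.mul_le_mul_right a hln).trans hne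
    rw [mul_assoc, coeff_C_mul, coeff_single_X_add_X_pow_pow_mul hik,
      if_neg (by rwa [Nat.mul_add_sub_mul_eq_iff hma hl1 hle]), mul_zero]

theorem totalDegree_sum_C_mul_X_add_X_pow_pow_mul_le [CommSemiring R] [Nontrivial R]
    (c : ℕ → R) (hm : 1 ≤ m) (hma : m ≤ a) (hne : n * a ≤ e) :
    (∑ l ∈ Icc 1 n, C (c l) * (X i + X k ^ m) ^ l * X k ^ (e - l * a)).totalDegree ≤
      e - a + m := by
  refine totalDegree_finsetSum_le fun l hl => ?_
  obtain ⟨hl1, hln⟩ := mem_Icc.mp hl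
  exact (totalDegree_C_mul_X_add_X_pow_pow_mul_le i k _ hm l _).trans
    (Nat.mul_add_sub_mul_le hma hl1 ((Nat.mul_le_mul_right a hln).trans hne))

theorem coeff_sum_C_mul_X_pow_mul_X_pow [CommSemiring R] (hjk : j ≠ k) (c : ℕ → R) (N : ℕ) :
    coeff (Finsupp.single k N) (∑ l ∈ Icc 1 n, C (c l) * X j ^ l * X k ^ (e - l * b)) = 0 := by
  rw [coeff_sum]
  exact Finset.sum_eq_zero fun l hl =>
    coeff_single_C_mul_X_pow_mul_X_pow_of_ne hjk _ (mem_Icc.mp hl).1 _ _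

theorem totalDegree_sum_C_mul_X_pow_mul_X_pow_le [CommSemiring R] [Nontrivial R] (c : ℕ → R)
    (hb : 1 ≤ b) (hne : n * b ≤ e) :
    (∑ l ∈ Icc 1 n, C (c l) * X j ^ l * X k ^ (e - l * b)).totalDegree ≤ e - b + 1 := by
  refine totalDegree_finsetSum_le fun l hl => ?_
  obtain ⟨hl1, hln⟩ := mem_Icc.mp hl
  have := Nat.mul_add_sub_mul_le hb hl1 ((Nat.mul_le_mul_right b hln).trans hne)
  rw [one_mul] at this
  exact (totalDegree_C_mul_X_pow_mul_X_pow_le j k _ l _).trans this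

end Sums

end MvPolynomial

theorem stmt9_general (a b : ℕ) (hab : a < b) (e : ℕ)
    (he : e = Nat.lcm a b) (m : ℕ) (hm : 0 < m) (hma : m < a) :
    ∀ v : MvPolynomial (Fin 3) ℂ,
      v = (∑ i ∈ Icc 1 (e / a),
            C ((e / a).choose i : ℂ) * (X 0 + X 2 ^ m) ^ i * X 2 ^ (e - i * a)) -
          (∑ j ∈ Icc 1 (e / b),
            C ((e / b).choose j : ℂ) * X 1 ^ j * X 2 ^ (e - j * b)) →
      v.totalDegree = e - a + m ∧
      v.coeff (Finsupp.single 2 (e - a + m)) = ((e / a : ℕ) : ℂ) := by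
  intro v hv
  have hae : a ≤ e :=
    Nat.le_of_dvd (he ▸ Nat.lcm_pos (by omega) (by omega)) (he ▸ Nat.dvd_lcm_left a b)
  have hea : 1 ≤ e / a := Nat.div_pos hae (by omega)
  have hcoeff : v.coeff (Finsupp.single 2 (e - a + m)) = ((e / a : ℕ) : ℂ) := by
    rw [hv, coeff_sub, coeff_sum_C_mul_X_add_X_pow_pow_mul (by decide) _ hma hea
      (Nat.div_mul_le_self e a), coeff_sum_C_mul_X_pow_mul_X_pow (by decide), sub_zero,
      Nat.choose_one_right]
  have hdeg : v.totalDegree ≤ e - a + m := by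
    rw [hv]
    refine (totalDegree_sub _ _).trans (max_le ?_ ?_)
    · exact totalDegree_sum_C_mul_X_add_X_pow_pow_mul_le _ hm hma.le (Nat.div_mul_le_self e a)
    · exact (totalDegree_sum_C_mul_X_pow_mul_X_pow_le _ (by omega)
        (Nat.div_mul_le_self e b)).trans (by omega)
  exact ⟨totalDegree_eq_of_coeff_single_ne_zero hdeg
    (hcoeff ▸ Nat.cast_ne_zero.mpr (by omega)), hcoeff⟩

theorem stmt9 (a b : ℕ) (ha : 2 < a) (hab : a < b) (e : ℕ)
    (he : e = Nat.lcm a b) (m : ℕ) (hm : 0 < m) (hma : m < a) :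
    ∀ v : MvPolynomial (Fin 3) ℂ,
      v = (∑ i ∈ Icc 1 (e / a),
            C ((e / a).choose i : ℂ) * (X 0 + X 2 ^ m) ^ i * X 2 ^ (e - i * a)) -
          (∑ j ∈ Icc 1 (e / b),
            C ((e / b).choose j : ℂ) * X 1 ^ j * X 2 ^ (e - j * b)) →
      v.totalDegree = e - a + m ∧
      v.coeff (Finsupp.single 2 (e - a + m)) = ((e / a : ℕ) : ℂ) :=
  stmt9_general a b hab e he m hm hma
end

section
/- For every positive integer n, the pairs (2n, 3n) and (2n, 5n) are tame: for every c > 3n (resp. c > 5n) there exists a tame polynomial automorphism of C^3 with multidegree (2n, 3n, c) (resp. (2n, 5n, c)). -/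
/-!
Write `u = 8 zⁿ`, `f₁ = x + u²` and `f₂ = y + P + zᵉ`, where `P` is the polynomial part of
`(u² + x) ^ (m/2)` for `m = 3, 5`, so that `P² - f₁ᵐ` has small degree. Every triangular map
`(f₁, f₂, z + h(f₁, f₂))` is tame, and total degree is multiplicative. If `n ∣ c`, then
`c = 2n a + mn b` and `h = xᵃ yᵇ` works. Otherwise `c = mn + e + 2n a` with `0 < e < 2n`, and
`h = (y² - xᵐ) xᵃ` works because
`f₂² - f₁ᵐ = (P² - f₁ᵐ) + (y + zᵉ)(2P + y + zᵉ)` has degree exactly `mn + e`.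
Lower bounds on total degrees are read off on the `z`-axis, where `f₂² - f₁ᵐ` becomes
`zᵉ (2 P(0, 0, z) + zᵉ)`.
-/
open MvPolynomial Finset

open scoped Polynomial

namespace TameMultidegree

section PolyMap

variable {n : ℕ}

theorem compPM_assoc (F G H : PolyMap n) :
    compPM (compPM F G) H = compPM F (compPM G H) := by
  funext i
  simp only [compPM]
  exact AlgHom.congr_fun (comp_aeval G (aeval H)) (F i)

@[simp] theorem idPM_compPM (F : PolyMap n) : compPM (idPM n) F = F := by
  funext i
  simp [compPM, idPM]

theorem IsPolyAut.comp {F G : PolyMap n} (hF : IsPolyAut F) (hG : IsPolyAut G) :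
    IsPolyAut (compPM F G) := by
  obtain ⟨F', hFF', hF'F⟩ := hF
  obtain ⟨G', hGG', hG'G⟩ := hG
  refine ⟨compPM G' F', ?_, ?_⟩
  · rw [compPM_assoc, ← compPM_assoc G, hGG', idPM_compPM, hFF']
  · rw [compPM_assoc, ← compPM_assoc F', hF'F, idPM_compPM, hG'G]

theorem aeval_eq_self_of_degreeOf_eq_zero {σ R : Type*} [CommSemiring R]
    {G : σ → MvPolynomial σ R} {j : σ} (hG : ∀ i, i ≠ j → G i = X i)
    {p : MvPolynomial σ R} (hp : degreeOf j p = 0) : aeval G p = p := by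
  conv_rhs => rw [← aeval_X_left_apply p]
  refine eval₂Hom_congr' rfl (fun i hi _ => hG i ?_) rfl
  rintro rfl
  exact mem_vars_iff_degreeOf_ne_zero.1 hi hp

noncomputable def elemPM (j : Fin n) (g : MvPolynomial (Fin n) ℂ) : PolyMap n :=
  Function.update (idPM n) j (X j + g)

@[simp] theorem elemPM_self (j : Fin n) (g : MvPolynomial (Fin n) ℂ) :
    elemPM j g j = X j + g :=
  Function.update_self j _ _

@[simp] theorem elemPM_of_ne {i j : Fin n} (g : MvPolynomial (Fin n) ℂ) (h : i ≠ j) :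
    elemPM j g i = X i :=
  Function.update_of_ne h _ _

@[simp] theorem elemPM_zero (j : Fin n) : elemPM j 0 = idPM n := by
  simp [elemPM, idPM]

theorem compPM_elemPM_elemPM {j : Fin n} {u : MvPolynomial (Fin n) ℂ} (hu : degreeOf j u = 0)
    (v : MvPolynomial (Fin n) ℂ) : compPM (elemPM j u) (elemPM j v) = elemPM j (v + u) := by
  funext i
  rcases eq_or_ne i j with rfl | hij
  · rw [compPM, elemPM_self, elemPM_self, map_add, aeval_X, elemPM_self,
      aeval_eq_self_of_degreeOf_eq_zero (fun k hk => elemPM_of_ne v hk) hu, add_assoc]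
  · simp [compPM, hij]

theorem isElementaryPM_elemPM {j : Fin n} {g : MvPolynomial (Fin n) ℂ} (hg : degreeOf j g = 0) :
    IsElementaryPM (elemPM j g) :=
  ⟨j, g, hg, elemPM_self j g, fun _ => elemPM_of_ne g⟩

theorem isPolyAut_elemPM {j : Fin n} {g : MvPolynomial (Fin n) ℂ} (hg : degreeOf j g = 0) :
    IsPolyAut (elemPM j g) := by
  refine ⟨elemPM j (-g), ?_, ?_⟩
  · rw [compPM_elemPM_elemPM hg, neg_add_cancel, elemPM_zero]
  · rw [compPM_elemPM_elemPM ((degreeOf_neg j g).trans hg), add_neg_cancel, elemPM_zero]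

end PolyMap

section Degree

variable {σ R : Type*}

theorem degreeOf_eq_zero_of_mem_supported [CommSemiring R] {p : MvPolynomial σ R} {s : Set σ}
    (hp : p ∈ supported R s) {j : σ} (hj : j ∉ s) : degreeOf j p = 0 := by
  by_contra h
  exact hj (mem_supported.1 hp (mem_vars_iff_degreeOf_ne_zero.2 h))

@[simp] theorem totalDegree_ofNat [CommSemiring R] (k : ℕ) [k.AtLeastTwo] :
    (no_index (OfNat.ofNat k) : MvPolynomial σ R).totalDegree = 0 := by
  rw [← map_ofNat C k, totalDegree_C]

theorem ne_zero_of_totalDegree_ne_zero [CommSemiring R] {p : MvPolynomial σ R}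
    (h : p.totalDegree ≠ 0) : p ≠ 0 := by
  rintro rfl
  exact h totalDegree_zero

theorem totalDegree_pow_of_isDomain [CommRing R] [IsDomain R] (p : MvPolynomial σ R) (k : ℕ) :
    (p ^ k).totalDegree = k * p.totalDegree := by
  rcases eq_or_ne p 0 with rfl | hp
  · cases k <;> simp
  induction k with
  | zero => simp
  | succ k ih => rw [pow_succ, totalDegree_mul_of_isDomain (pow_ne_zero k hp) hp, ih]; ring

theorem natDegree_aeval_le_totalDegree [CommSemiring R] {g : σ → R[X]}
    (hg : ∀ i, (g i).natDegree ≤ 1) (p : MvPolynomial σ R) :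
    (aeval g p).natDegree ≤ p.totalDegree := by
  rw [aeval_def, eval₂_eq]
  refine Polynomial.natDegree_sum_le_of_forall_le _ _ fun s hs => ?_
  calc (algebraMap R R[X] (coeff s p) * ∏ i ∈ s.support, g i ^ s i).natDegree
      ≤ 0 + ∑ i ∈ s.support, (g i ^ s i).natDegree :=
        Polynomial.natDegree_mul_le.trans <| add_le_add (by simp)
          (Polynomial.natDegree_prod_le _ _)
    _ ≤ ∑ i ∈ s.support, s i := by
        rw [zero_add]
        exact sum_le_sum fun i _ =>
          Polynomial.natDegree_pow_le.trans (by simpa using Nat.mul_le_mul_left (s i) (hg i))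
    _ ≤ p.totalDegree := le_totalDegree hs

end Degree

noncomputable def zAxis : MvPolynomial (Fin 3) ℂ →ₐ[ℂ] ℂ[X] := aeval ![0, 0, Polynomial.X]

@[simp] theorem zAxis_X_zero : zAxis (X 0) = 0 := by simp [zAxis]
@[simp] theorem zAxis_X_one : zAxis (X 1) = 0 := by simp [zAxis]
@[simp] theorem zAxis_X_two : zAxis (X 2) = Polynomial.X := by simp [zAxis]

theorem totalDegree_eq_of_natDegree_zAxis {p : MvPolynomial (Fin 3) ℂ} {k : ℕ}
    (hle : p.totalDegree ≤ k) (hk : (zAxis p).natDegree = k) : p.totalDegree = k :=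
  le_antisymm hle <| hk ▸ natDegree_aeval_le_totalDegree (fun i => by fin_cases i <;> simp) p

theorem compPM_elemPM_eq_triangular {A B h : MvPolynomial (Fin 3) ℂ} (hA : degreeOf 1 A = 0) :
    compPM (elemPM 2 h) (compPM (elemPM 0 A) (elemPM 1 B)) =
      ![X 0 + A, X 1 + B, X 2 + aeval ![X 0 + A, X 1 + B, X 2] h] := by
  have hG : compPM (elemPM 0 A) (elemPM 1 B) = ![X 0 + A, X 1 + B, X 2] := by
    have hG0 : aeval (elemPM 1 B) (elemPM 0 A 0) = X 0 + A := by
      rw [elemPM_self, map_add, aeval_X, elemPM_of_ne B (by decide),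
        aeval_eq_self_of_degreeOf_eq_zero (fun k hk => elemPM_of_ne B hk) hA]
    have hG1 : aeval (elemPM 1 B) (elemPM 0 A 1) = X 1 + B := by
      rw [elemPM_of_ne A (by decide), aeval_X, elemPM_self]
    have hG2 : aeval (elemPM 1 B) (elemPM 0 A 2) = X 2 := by
      rw [elemPM_of_ne A (by decide), aeval_X, elemPM_of_ne B (by decide)]
    funext i
    fin_cases i
    exacts [hG0, hG1, hG2]
  rw [hG]
  funext i
  fin_cases i <;> simp [compPM, - aeval_eq_bind₁]

theorem exists_tame_mdeg3 {A B h : MvPolynomial (Fin 3) ℂ} (hA : A ∈ supported ℂ {2})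
    (hB : B ∈ supported ℂ {0, 2}) (hh : h ∈ supported ℂ {0, 1})
    (hq : 1 < (aeval ![X 0 + A, X 1 + B, X 2] h).totalDegree) :
    ∃ F : PolyMap 3, IsTamePM F ∧ IsPolyAut F ∧
      mdeg3 F = ((X 0 + A).totalDegree, (X 1 + B).totalDegree,
        (aeval ![X 0 + A, X 1 + B, X 2] h).totalDegree) := by
  have hA0 : degreeOf 0 A = 0 := degreeOf_eq_zero_of_mem_supported hA (by simp)
  have hA1 : degreeOf 1 A = 0 := degreeOf_eq_zero_of_mem_supported hA (by simp)
  have hB1 : degreeOf 1 B = 0 := degreeOf_eq_zero_of_mem_supported hB (by simp)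
  have hh2 : degreeOf 2 h = 0 := degreeOf_eq_zero_of_mem_supported hh (by simp)
  refine ⟨_, .comp _ _ (.elem _ (isElementaryPM_elemPM hh2))
      (.comp _ _ (.elem _ (isElementaryPM_elemPM hA0)) (.elem _ (isElementaryPM_elemPM hB1))),
    IsPolyAut.comp (isPolyAut_elemPM hh2)
      (IsPolyAut.comp (isPolyAut_elemPM hA0) (isPolyAut_elemPM hB1)), ?_⟩
  rw [compPM_elemPM_eq_triangular hA1]
  simp only [mdeg3, Matrix.cons_val]
  rw [totalDegree_add_eq_right_of_totalDegree_lt (q := X 2) (by rwa [totalDegree_X])]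

section Construction

/-- `x + u²` with `u = 8 zⁿ`; the factor `8` makes the approximate roots below integral. -/
noncomputable def fstCoord (n : ℕ) : MvPolynomial (Fin 3) ℂ := X 0 + 64 * X 2 ^ (2 * n)

noncomputable def sndCoord (P : MvPolynomial (Fin 3) ℂ) (e : ℕ) : MvPolynomial (Fin 3) ℂ :=
  X 1 + (P + X 2 ^ e)

/-- `P` approximates `(fstCoord n) ^ (m / 2)`. The degree bound is only needed when `n ∤ c`,
which forces `n ≥ 2`; for `m = 5` it fails at `n = 1`. -/
structure IsApproxHalfPow (m n : ℕ) (P : MvPolynomial (Fin 3) ℂ) : Prop where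
  mem_supported : P ∈ supported ℂ {0, 2}
  totalDegree_le : P.totalDegree ≤ m * n
  natDegree_zAxis : (zAxis P).natDegree = m * n
  zAxis_sq_sub_pow : zAxis (P ^ 2 - fstCoord n ^ m) = 0
  totalDegree_sq_sub_pow_le : 2 ≤ n → (P ^ 2 - fstCoord n ^ m).totalDegree ≤ m * n + 1

variable {m n e : ℕ} {P : MvPolynomial (Fin 3) ℂ}

theorem totalDegree_fstCoord (hn : 0 < n) : (fstCoord n).totalDegree = 2 * n := by
  apply totalDegree_eq_of_natDegree_zAxis
  · grw [fstCoord, totalDegree_add, totalDegree_mul]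
    simp
    omega
  · simp [fstCoord, map_ofNat]

theorem IsApproxHalfPow.totalDegree_sndCoord (hP : IsApproxHalfPow m n P) (he : e < m * n) :
    (sndCoord P e).totalDegree = m * n := by
  apply totalDegree_eq_of_natDegree_zAxis
  · grw [sndCoord, totalDegree_add, totalDegree_add, hP.totalDegree_le, totalDegree_X,
      totalDegree_X_pow]
    omega
  · simp only [sndCoord, map_add, zAxis_X_one, zAxis_X_two, map_pow, zero_add]
    rw [Polynomial.natDegree_add_eq_left_of_natDegree_lt] <;>
      simp [hP.natDegree_zAxis, he]

theorem sndCoord_sq_sub_pow (P : MvPolynomial (Fin 3) ℂ) (n m e : ℕ) :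
    sndCoord P e ^ 2 - fstCoord n ^ m =
      (P ^ 2 - fstCoord n ^ m) + (X 1 + X 2 ^ e) * (2 * P + (X 1 + X 2 ^ e)) := by
  rw [sndCoord]
  ring

theorem IsApproxHalfPow.totalDegree_sndCoord_sq_sub_pow (hP : IsApproxHalfPow m n P)
    (hn : 2 ≤ n) (he0 : 0 < e) (he : e < m * n) :
    (sndCoord P e ^ 2 - fstCoord n ^ m).totalDegree = m * n + e := by
  rw [sndCoord_sq_sub_pow]
  apply totalDegree_eq_of_natDegree_zAxis
  · grw [totalDegree_add, totalDegree_mul, hP.totalDegree_sq_sub_pow_le hn, totalDegree_add,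
      totalDegree_add, totalDegree_add, totalDegree_mul, hP.totalDegree_le, totalDegree_X,
      totalDegree_X_pow]
    simp
    omega
  · have h2P : (2 * zAxis P).natDegree = m * n := by
      rw [← map_ofNat Polynomial.C 2, Polynomial.natDegree_C_mul two_ne_zero, hP.natDegree_zAxis]
    have h2PX : (2 * zAxis P + Polynomial.X ^ e).natDegree = m * n := by
      rwa [Polynomial.natDegree_add_eq_left_of_natDegree_lt (by simpa [h2P])]
    simp only [map_add, map_mul, map_pow, map_ofNat, hP.zAxis_sq_sub_pow, zAxis_X_one,
      zAxis_X_two, zero_add]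
    rw [Polynomial.natDegree_X_pow_mul (n := e) (Polynomial.ne_zero_of_natDegree_gt (h2PX ▸ he)),
      h2PX]

theorem exists_eq_add_mul_of_odd {m n c : ℕ} (hm : Odd m) (hn : 0 < n) (hc : m * n ≤ c) :
    (∃ a b, c = 2 * n * a + m * n * b) ∨
      (2 ≤ n ∧ ∃ e a, 0 < e ∧ e < 2 * n ∧ c = m * n + e + 2 * n * a) := by
  obtain ⟨k, rfl⟩ := hm
  obtain ⟨s, hs⟩ : ∃ s, c / n = 2 * k + 1 + s :=
    Nat.exists_eq_add_of_le ((Nat.le_div_iff_mul_le hn).2 (by linarith))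
  have hc : c = n * (2 * k + 1 + s) + c % n := by rw [← hs, Nat.div_add_mod]
  have hr : c % n < n := Nat.mod_lt c hn
  rcases Nat.even_or_odd' s with ⟨t, rfl | rfl⟩ <;>
    rcases Nat.eq_zero_or_pos (c % n) with hr0 | hr0
  · exact .inl ⟨t, 1, by rw [hc, hr0]; ring⟩
  · exact .inr ⟨by omega, c % n, t, hr0, by omega, by linarith⟩
  · exact .inl ⟨k + 1 + t, 0, by rw [hc, hr0]; ring⟩
  · exact .inr ⟨by omega, n + c % n, t, by omega, by omega, by linarith⟩

theorem IsApproxHalfPow.exists_tame_of_totalDegree_eq (hP : IsApproxHalfPow m n P) (hn : 0 < n)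
    (he : e < m * n) {h : MvPolynomial (Fin 3) ℂ} (hh : h ∈ supported ℂ {0, 1}) {c : ℕ}
    (hc : 1 < c) (hq : (aeval ![fstCoord n, sndCoord P e, X 2] h).totalDegree = c) :
    ∃ F : PolyMap 3, IsTamePM F ∧ IsPolyAut F ∧ mdeg3 F = (2 * n, m * n, c) := by
  have hA : (64 * X 2 ^ (2 * n) : MvPolynomial (Fin 3) ℂ) ∈ supported ℂ {2} := by
    aesop (add simp X_mem_supported)
  have hB : P + X 2 ^ e ∈ supported ℂ {0, 2} := by
    have := hP.mem_supported
    aesop (add simp X_mem_supported)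
  obtain ⟨F, hF, hFaut, hFdeg⟩ := exists_tame_mdeg3 hA hB hh (hq ▸ hc :
    1 < (aeval ![fstCoord n, sndCoord P e, X 2] h).totalDegree)
  refine ⟨F, hF, hFaut, hFdeg.trans ?_⟩
  change ((fstCoord n).totalDegree, (sndCoord P e).totalDegree,
    (aeval ![fstCoord n, sndCoord P e, X 2] h).totalDegree) = _
  rw [totalDegree_fstCoord hn, hP.totalDegree_sndCoord he, hq]

theorem IsApproxHalfPow.exists_tame (hP : IsApproxHalfPow m n P) (hm : Odd m) (hm3 : 3 ≤ m)
    (hn : 0 < n) {c : ℕ} (hc : m * n < c) :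
    ∃ F : PolyMap 3, IsTamePM F ∧ IsPolyAut F ∧ mdeg3 F = (2 * n, m * n, c) := by
  have h2n : 2 * n < m * n := by nlinarith
  have hf₁ := totalDegree_fstCoord hn
  rcases exists_eq_add_mul_of_odd hm hn hc.le with ⟨a, b, rfl⟩ | ⟨hn2, e, a, he0, he, rfl⟩
  · have hf₂ := hP.totalDegree_sndCoord (e := 1) (by omega)
    refine hP.exists_tame_of_totalDegree_eq hn (e := 1) (h := X 0 ^ a * X 1 ^ b) (by omega)
      (by aesop (add simp X_mem_supported)) (by omega) ?_
    simp only [map_mul, map_pow, aeval_X, Matrix.cons_val]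
    rw [totalDegree_mul_of_isDomain (pow_ne_zero _ (ne_zero_of_totalDegree_ne_zero (by omega)))
      (pow_ne_zero _ (ne_zero_of_totalDegree_ne_zero (by omega))), totalDegree_pow_of_isDomain,
      totalDegree_pow_of_isDomain, hf₁, hf₂]
    ring
  · have hg := hP.totalDegree_sndCoord_sq_sub_pow hn2 he0 (by omega)
    refine hP.exists_tame_of_totalDegree_eq hn (e := e) (h := (X 1 ^ 2 - X 0 ^ m) * X 0 ^ a)
      (by omega) (by aesop (add simp X_mem_supported)) (by omega) ?_
    simp only [map_mul, map_pow, map_sub, aeval_X, Matrix.cons_val]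
    rw [totalDegree_mul_of_isDomain (ne_zero_of_totalDegree_ne_zero (by omega))
      (pow_ne_zero _ (ne_zero_of_totalDegree_ne_zero (by omega))), totalDegree_pow_of_isDomain,
      hg, hf₁]
    ring

/-- The polynomial part of `(u² + x) ^ (3/2) = u³ + (3/2) u x + …` for `u = 8 zⁿ`. -/
noncomputable def approxPowThreeHalves (n : ℕ) : MvPolynomial (Fin 3) ℂ :=
  512 * X 2 ^ (3 * n) + 12 * X 2 ^ n * X 0

theorem approxPowThreeHalves_sq_sub_pow (n : ℕ) :
    approxPowThreeHalves n ^ 2 - fstCoord n ^ 3 = -(48 * X 2 ^ (2 * n) * X 0 ^ 2 + X 0 ^ 3) := by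
  rw [approxPowThreeHalves, fstCoord]
  ring

theorem isApproxHalfPow_approxPowThreeHalves (hn : 0 < n) :
    IsApproxHalfPow 3 n (approxPowThreeHalves n) where
  mem_supported := by
    rw [approxPowThreeHalves]
    aesop (add simp X_mem_supported)
  totalDegree_le := by
    grw [approxPowThreeHalves, totalDegree_add, totalDegree_mul, totalDegree_mul, totalDegree_mul]
    simp
    omega
  natDegree_zAxis := by simp [approxPowThreeHalves, map_ofNat]
  zAxis_sq_sub_pow := by simp [approxPowThreeHalves_sq_sub_pow]
  totalDegree_sq_sub_pow_le _ := by
    grw [approxPowThreeHalves_sq_sub_pow, totalDegree_neg, totalDegree_add, totalDegree_mul,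
      totalDegree_mul]
    simp
    omega

/-- The polynomial part of `(u² + x) ^ (5/2) = u⁵ + (5/2) u³ x + (15/8) u x² + …`
for `u = 8 zⁿ`. -/
noncomputable def approxPowFiveHalves (n : ℕ) : MvPolynomial (Fin 3) ℂ :=
  32768 * X 2 ^ (5 * n) + 1280 * X 2 ^ (3 * n) * X 0 + 15 * X 2 ^ n * X 0 ^ 2

theorem approxPowFiveHalves_sq_sub_pow (n : ℕ) :
    approxPowFiveHalves n ^ 2 - fstCoord n ^ 5 =
      -(2560 * X 2 ^ (4 * n) * X 0 ^ 3 + 95 * X 2 ^ (2 * n) * X 0 ^ 4 + X 0 ^ 5) := by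
  rw [approxPowFiveHalves, fstCoord]
  ring

theorem isApproxHalfPow_approxPowFiveHalves (hn : 0 < n) :
    IsApproxHalfPow 5 n (approxPowFiveHalves n) where
  mem_supported := by
    rw [approxPowFiveHalves]
    aesop (add simp X_mem_supported)
  totalDegree_le := by
    grw [approxPowFiveHalves, totalDegree_add, totalDegree_add, totalDegree_mul, totalDegree_mul,
      totalDegree_mul, totalDegree_mul, totalDegree_mul]
    simp
    omega
  natDegree_zAxis := by simp [approxPowFiveHalves, map_ofNat]
  zAxis_sq_sub_pow := by simp [approxPowFiveHalves_sq_sub_pow]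
  totalDegree_sq_sub_pow_le hn2 := by
    grw [approxPowFiveHalves_sq_sub_pow, totalDegree_neg, totalDegree_add, totalDegree_add,
      totalDegree_mul, totalDegree_mul, totalDegree_mul, totalDegree_mul]
    simp
    omega

end Construction

end TameMultidegree

theorem stmt16 (n : ℕ) (hn : 0 < n) :
    (∀ c : ℕ, 3 * n < c →
      ∃ F : PolyMap 3, IsTamePM F ∧ IsPolyAut F ∧ mdeg3 F = (2 * n, 3 * n, c)) ∧
    (∀ c : ℕ, 5 * n < c →
      ∃ F : PolyMap 3, IsTamePM F ∧ IsPolyAut F ∧ mdeg3 F = (2 * n, 5 * n, c)) :=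
  ⟨fun _ hc => (TameMultidegree.isApproxHalfPow_approxPowThreeHalves hn).exists_tame
      (by decide) le_rfl hn hc,
    fun _ hc => (TameMultidegree.isApproxHalfPow_approxPowFiveHalves hn).exists_tame
      (by decide) (by norm_num) hn hc⟩
end
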